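/- Let H be a real Hilbert space and f : H → ℝ Lipschitz with constant K. For ε > 0 define the inf-convolution f_ε(x) = inf_{y∈H} [ f(y) + ‖x−y‖²/(2ε) ]. Then: (i) f_ε is real-valued and Lipschitz with constant K; (ii) 0 ≤ f(x) − f_ε(x) ≤ K²ε/2 for all x, so f_ε → f uniformly as ε → 0; (iii) x ↦ f_ε(x) − ‖x‖²/(2ε) is concave (f_ε is semiconcave); (iv) if moreover there is C ≥ 0 such that x ↦ f(x) + C‖x‖² is convex, then there exist ε₀ > 0 and C′ ≥ 0 such that for all 0 < ε ≤ ε₀ the function x ↦ f_ε(x) + C′‖x‖² is convex (semiconvexity with constant independent of ε). -/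

import Mathlib

/-!
The identity `‖a • u + b • v‖² = a‖u‖² + b‖v‖² - a b ‖u - v‖²` for `a + b = 1` turns convexity of
`g + c‖·‖²` into `g (a • x + b • z) ≤ a g x + b g z + c a b ‖x - z‖²`. Testing the infimum defining
`f_ε (a • x + b • z)` at a single point `y` gives concavity of `f_ε - ‖·‖²/(2ε)`; testing it at the
convex combination of near-minimizers for `x` and `z` gives semiconvexity with constant `2C` as soon
as `4Cε ≤ 1`. The lower bound `f - K²ε/2 ≤ f_ε` is Young's inequality `K r ≤ r²/(2ε) + K²ε/2`.
-/

open Set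

noncomputable section

/-- The inf-convolution `f_ε(x) = inf_{y∈H} [ f(y) + ‖x-y‖²/(2ε) ]`. -/
def infConv {H : Type*} [NormedAddCommGroup H] (f : H → ℝ) (ε : ℝ) (x : H) : ℝ :=
  sInf {v | ∃ y : H, v = f y + ‖x - y‖ ^ 2 / (2 * ε)}

theorem norm_smul_add_smul_sq {E : Type*} [NormedAddCommGroup E] [InnerProductSpace ℝ E]
    {a b : ℝ} (hab : a + b = 1) (u v : E) :
    ‖a • u + b • v‖ ^ 2 = a * ‖u‖ ^ 2 + b * ‖v‖ ^ 2 - a * b * ‖u - v‖ ^ 2 := by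
  have h_expand : ‖a • u + b • v‖ ^ 2
      = a ^ 2 * ‖u‖ ^ 2 + 2 * a * b * inner ℝ u v + b ^ 2 * ‖v‖ ^ 2 := by
    rw [norm_add_sq_real, norm_smul, norm_smul, real_inner_smul_left, real_inner_smul_right,
      Real.norm_eq_abs, Real.norm_eq_abs, mul_pow, mul_pow, sq_abs, sq_abs]
    ring
  rw [h_expand, norm_sub_sq_real]
  linear_combination (a * ‖u‖ ^ 2 + b * ‖v‖ ^ 2) * hab

theorem convexOn_add_mul_norm_sq_iff {E : Type*} [NormedAddCommGroup E] [InnerProductSpace ℝ E]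
    {g : E → ℝ} {c : ℝ} :
    ConvexOn ℝ univ (fun x => g x + c * ‖x‖ ^ 2) ↔
      ∀ x z : E, ∀ a b : ℝ, 0 ≤ a → 0 ≤ b → a + b = 1 →
        g (a • x + b • z) ≤ a * g x + b * g z + c * a * b * ‖x - z‖ ^ 2 := by
  simp only [ConvexOn, convex_univ, mem_univ, true_and, true_implies, smul_eq_mul]
  refine forall₂_congr fun x z => forall₂_congr fun a b => imp_congr_right fun _ =>
    imp_congr_right fun _ => imp_congr_right fun hab => ?_
  rw [norm_smul_add_smul_sq hab]
  constructor <;> intro h <;> linarith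

theorem norm_sq_le_two_mul_norm_sub_sq_add {E : Type*} [SeminormedAddCommGroup E] (p q : E) :
    ‖q‖ ^ 2 ≤ 2 * ‖p - q‖ ^ 2 + 2 * ‖p‖ ^ 2 := by
  have h : ‖q‖ ≤ ‖p‖ + ‖p - q‖ := by simpa using norm_sub_le p (p - q)
  nlinarith [norm_nonneg q, add_sq_le (a := ‖p‖) (b := ‖p - q‖)]

section

variable {E : Type*} [NormedAddCommGroup E] {f : E → ℝ} {K ε : ℝ}

theorem sub_le_add_norm_sq_div (hf : ∀ x y : E, |f x - f y| ≤ K * ‖x - y‖) (hε : 0 < ε)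
    (x y : E) : f x - K ^ 2 * ε / 2 ≤ f y + ‖x - y‖ ^ 2 / (2 * ε) := by
  have hfxy : f x ≤ f y + K * ‖x - y‖ := by linarith [(abs_le.mp (hf x y)).2]
  calc f x - K ^ 2 * ε / 2
      ≤ f y + ‖x - y‖ ^ 2 / (2 * ε) - (‖x - y‖ - K * ε) ^ 2 / (2 * ε) := by
        field_simp
        nlinarith
    _ ≤ f y + ‖x - y‖ ^ 2 / (2 * ε) := by
        have : 0 ≤ (‖x - y‖ - K * ε) ^ 2 / (2 * ε) := by positivity
        linarith

theorem bddBelow_infConv_set (hf : ∀ x y : E, |f x - f y| ≤ K * ‖x - y‖) (hε : 0 < ε) (x : E) :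
    BddBelow {v | ∃ y : E, v = f y + ‖x - y‖ ^ 2 / (2 * ε)} :=
  ⟨f x - K ^ 2 * ε / 2, by rintro _ ⟨y, rfl⟩; exact sub_le_add_norm_sq_div hf hε x y⟩

theorem infConv_le (hf : ∀ x y : E, |f x - f y| ≤ K * ‖x - y‖) (hε : 0 < ε) (x y : E) :
    infConv f ε x ≤ f y + ‖x - y‖ ^ 2 / (2 * ε) :=
  csInf_le (bddBelow_infConv_set hf hε x) ⟨y, rfl⟩

theorem le_infConv {c : ℝ} (x : E) (h : ∀ y, c ≤ f y + ‖x - y‖ ^ 2 / (2 * ε)) :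
    c ≤ infConv f ε x :=
  le_csInf ⟨_, x, rfl⟩ (by rintro _ ⟨y, rfl⟩; exact h y)

theorem exists_lt_infConv_add {δ : ℝ} (hδ : 0 < δ) (x : E) :
    ∃ y, f y + ‖x - y‖ ^ 2 / (2 * ε) < infConv f ε x + δ := by
  obtain ⟨_, ⟨y, rfl⟩, hy⟩ :=
    exists_lt_of_csInf_lt (s := {v | ∃ y : E, v = f y + ‖x - y‖ ^ 2 / (2 * ε)}) ⟨_, x, rfl⟩
      (lt_add_of_pos_right _ hδ)
  exact ⟨y, hy⟩

theorem infConv_le_self (hf : ∀ x y : E, |f x - f y| ≤ K * ‖x - y‖) (hε : 0 < ε) (x : E) :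
    infConv f ε x ≤ f x := by
  simpa using infConv_le hf hε x x

theorem sub_le_infConv (hf : ∀ x y : E, |f x - f y| ≤ K * ‖x - y‖) (hε : 0 < ε) (x : E) :
    f x - K ^ 2 * ε / 2 ≤ infConv f ε x :=
  le_infConv x (sub_le_add_norm_sq_div hf hε x)

theorem infConv_le_infConv_add (hf : ∀ x y : E, |f x - f y| ≤ K * ‖x - y‖) (hε : 0 < ε)
    (x z : E) : infConv f ε x ≤ infConv f ε z + K * ‖x - z‖ := by
  rw [← sub_le_iff_le_add]
  refine le_infConv z fun y => ?_
  have hshift := infConv_le hf hε x (y + (x - z))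
  have hlip := (abs_le.mp (hf (y + (x - z)) y)).2
  rw [show x - (y + (x - z)) = z - y by abel] at hshift
  rw [add_sub_cancel_left] at hlip
  linarith

theorem abs_infConv_sub_le (hf : ∀ x y : E, |f x - f y| ≤ K * ‖x - y‖) (hε : 0 < ε) (x z : E) :
    |infConv f ε x - infConv f ε z| ≤ K * ‖x - z‖ := by
  have hxz := infConv_le_infConv_add hf hε x z
  have hzx := infConv_le_infConv_add hf hε z x
  rw [norm_sub_rev] at hzx
  exact abs_sub_le_iff.2 ⟨by linarith, by linarith⟩

end

section

variable {E : Type*} [NormedAddCommGroup E] [InnerProductSpace ℝ E] {f : E → ℝ} {K ε : ℝ}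

theorem concaveOn_infConv_sub_norm_sq_div (hf : ∀ x y : E, |f x - f y| ≤ K * ‖x - y‖)
    (hε : 0 < ε) : ConcaveOn ℝ univ fun x => infConv f ε x - ‖x‖ ^ 2 / (2 * ε) := by
  rw [← neg_convexOn_iff]
  have hneg : (-fun x => infConv f ε x - ‖x‖ ^ 2 / (2 * ε))
      = fun x => -infConv f ε x + (2 * ε)⁻¹ * ‖x‖ ^ 2 := by
    ext x; simp only [Pi.neg_apply]; ring
  rw [hneg, convexOn_add_mul_norm_sq_iff]
  intro x z a b ha hb hab
  suffices a * infConv f ε x + b * infConv f ε z - (2 * ε)⁻¹ * a * b * ‖x - z‖ ^ 2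
      ≤ infConv f ε (a • x + b • z) by linarith
  refine le_infConv _ fun y => ?_
  have hx := mul_le_mul_of_nonneg_left (infConv_le hf hε x y) ha
  have hz := mul_le_mul_of_nonneg_left (infConv_le hf hε z y) hb
  have hw : a • x + b • z - y = a • (x - y) + b • (z - y) := by
    rw [eq_sub_of_add_eq' hab]; module
  rw [hw, norm_smul_add_smul_sq hab, sub_sub_sub_cancel_right]
  have hfy : f y = a * f y + b * f y := by rw [← add_mul, hab, one_mul]
  rw [div_eq_mul_inv] at hx hz ⊢
  linarith

theorem infConv_smul_add_smul_le {C : ℝ} (hf : ∀ x y : E, |f x - f y| ≤ K * ‖x - y‖)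
    (hC : 0 ≤ C) (hconv : ConvexOn ℝ univ fun x => f x + C * ‖x‖ ^ 2) (hε : 0 < ε)
    (hεC : 4 * C * ε ≤ 1) {a b : ℝ} (ha : 0 ≤ a) (hb : 0 ≤ b) (hab : a + b = 1) (x z y₁ y₂ : E) :
    infConv f ε (a • x + b • z) ≤ a * (f y₁ + ‖x - y₁‖ ^ 2 / (2 * ε))
      + b * (f y₂ + ‖z - y₂‖ ^ 2 / (2 * ε)) + 2 * C * a * b * ‖x - z‖ ^ 2 := by
  have hw := infConv_le hf hε (a • x + b • z) (a • y₁ + b • y₂)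
  have hfy := convexOn_add_mul_norm_sq_iff.1 hconv y₁ y₂ a b ha hb hab
  have hsplit : a • x + b • z - (a • y₁ + b • y₂) = a • (x - y₁) + b • (z - y₂) := by
    rw [eq_sub_of_add_eq' hab]; module
  rw [hsplit, norm_smul_add_smul_sq hab, sub_sub_sub_comm] at hw
  have hq : C * ‖y₁ - y₂‖ ^ 2 ≤ ‖x - z - (y₁ - y₂)‖ ^ 2 / (2 * ε) + 2 * C * ‖x - z‖ ^ 2 := by
    have h2C : 2 * C * ‖x - z - (y₁ - y₂)‖ ^ 2 ≤ ‖x - z - (y₁ - y₂)‖ ^ 2 / (2 * ε) := by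
      rw [le_div_iff₀ (by positivity)]
      nlinarith [sq_nonneg ‖x - z - (y₁ - y₂)‖]
    nlinarith [norm_sq_le_two_mul_norm_sub_sq_add (x - z) (y₁ - y₂)]
  have hab_q := mul_le_mul_of_nonneg_left hq (mul_nonneg ha hb)
  simp only [div_eq_mul_inv] at hw hab_q ⊢
  linarith

theorem convexOn_infConv_add_mul_norm_sq {C : ℝ} (hf : ∀ x y : E, |f x - f y| ≤ K * ‖x - y‖)
    (hC : 0 ≤ C) (hconv : ConvexOn ℝ univ fun x => f x + C * ‖x‖ ^ 2) (hε : 0 < ε)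
    (hεC : 4 * C * ε ≤ 1) : ConvexOn ℝ univ fun x => infConv f ε x + 2 * C * ‖x‖ ^ 2 := by
  refine convexOn_add_mul_norm_sq_iff.2 fun x z a b ha hb hab => ?_
  refine le_of_forall_pos_le_add fun δ hδ => ?_
  obtain ⟨y₁, hy₁⟩ := exists_lt_infConv_add (f := f) (ε := ε) hδ x
  obtain ⟨y₂, hy₂⟩ := exists_lt_infConv_add (f := f) (ε := ε) hδ z
  have h := infConv_smul_add_smul_le hf hC hconv hε hεC ha hb hab x z y₁ y₂
  have h₁ := mul_le_mul_of_nonneg_left hy₁.le ha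
  have h₂ := mul_le_mul_of_nonneg_left hy₂.le hb
  have hδ_split : δ = a * δ + b * δ := by rw [← add_mul, hab, one_mul]
  linarith

end

theorem infConv_properties_general {H : Type*} [NormedAddCommGroup H] [InnerProductSpace ℝ H]
    (f : H → ℝ) (K : ℝ)
    (hf : ∀ x y : H, |f x - f y| ≤ K * ‖x - y‖) :
    (∀ ε : ℝ, 0 < ε → ∀ x : H, BddBelow {v | ∃ y : H, v = f y + ‖x - y‖ ^ 2 / (2 * ε)}) ∧
    (∀ ε : ℝ, 0 < ε → ∀ x y : H, |infConv f ε x - infConv f ε y| ≤ K * ‖x - y‖) ∧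
    (∀ ε : ℝ, 0 < ε → ∀ x : H,
      0 ≤ f x - infConv f ε x ∧ f x - infConv f ε x ≤ K ^ 2 * ε / 2) ∧
    (∀ ε : ℝ, 0 < ε →
      ConcaveOn ℝ univ fun x => infConv f ε x - ‖x‖ ^ 2 / (2 * ε)) ∧
    (∀ C : ℝ, 0 ≤ C → ConvexOn ℝ univ (fun x => f x + C * ‖x‖ ^ 2) →
      ∃ ε₀ > (0 : ℝ), ∃ C' ≥ (0 : ℝ), ∀ ε : ℝ, 0 < ε → ε ≤ ε₀ →
        ConvexOn ℝ univ fun x => infConv f ε x + C' * ‖x‖ ^ 2) := by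
  refine ⟨fun ε hε => bddBelow_infConv_set hf hε, fun ε hε => abs_infConv_sub_le hf hε,
    fun ε hε x => ⟨sub_nonneg.2 (infConv_le_self hf hε x), by linarith [sub_le_infConv hf hε x]⟩,
    fun ε hε => concaveOn_infConv_sub_norm_sq_div hf hε, fun C hC hconv => ?_⟩
  refine ⟨1 / (4 * C + 1), by positivity, 2 * C, by positivity, fun ε hε hε₀ => ?_⟩
  refine convexOn_infConv_add_mul_norm_sq hf hC hconv hε ?_
  rw [le_div_iff₀ (by positivity)] at hε₀
  linarith

/-- **Properties of inf-convolutions** (Lemma 4.1 (i)–(iii) and Lasry–Lions regularization).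
For `f : H → ℝ` `K`-Lipschitz on a real Hilbert space and `ε > 0`:
(i) `f_ε` is real-valued (the infimum is finite) and `K`-Lipschitz;
(ii) `0 ≤ f - f_ε ≤ K²ε/2`, so `f_ε → f` uniformly;
(iii) `f_ε - ‖·‖²/(2ε)` is concave;
(iv) if `f + C‖·‖²` is convex for some `C ≥ 0`, then there are `ε₀ > 0` and `C' ≥ 0`
such that `f_ε + C'‖·‖²` is convex for all `0 < ε ≤ ε₀`. -/
theorem infConv_properties {H : Type*} [NormedAddCommGroup H] [InnerProductSpace ℝ H]
    [CompleteSpace H] (f : H → ℝ) (K : ℝ) (hK : 0 ≤ K)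
    (hf : ∀ x y : H, |f x - f y| ≤ K * ‖x - y‖) :
    (∀ ε : ℝ, 0 < ε → ∀ x : H, BddBelow {v | ∃ y : H, v = f y + ‖x - y‖ ^ 2 / (2 * ε)}) ∧
    (∀ ε : ℝ, 0 < ε → ∀ x y : H, |infConv f ε x - infConv f ε y| ≤ K * ‖x - y‖) ∧
    (∀ ε : ℝ, 0 < ε → ∀ x : H,
      0 ≤ f x - infConv f ε x ∧ f x - infConv f ε x ≤ K ^ 2 * ε / 2) ∧
    (∀ ε : ℝ, 0 < ε →
      ConcaveOn ℝ univ fun x => infConv f ε x - ‖x‖ ^ 2 / (2 * ε)) ∧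
    (∀ C : ℝ, 0 ≤ C → ConvexOn ℝ univ (fun x => f x + C * ‖x‖ ^ 2) →
      ∃ ε₀ > (0 : ℝ), ∃ C' ≥ (0 : ℝ), ∀ ε : ℝ, 0 < ε → ε ≤ ε₀ →
        ConvexOn ℝ univ fun x => infConv f ε x + C' * ‖x‖ ^ 2) :=
  infConv_properties_general f K hf

end
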